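/- arXiv:1009.4081 — 3 statements merged into one kernel-verified Lean document; each statement's English description precedes it below -/
import Mathlib

section
/- If f : [a,b] → (0,∞) is r-convex and g : [a,b] → (0,∞) is s-convex on [a,b] with a < b, r > 1, and 1/r + 1/s = 1, then (1/(b-a)) ∫_a^b f(x)g(x) dx ≤ ((f(a)^r + f(b)^r)/2)^(1/r) · ((g(a)^s + g(b)^s)/2)^(1/s). -/
/-!
Put `φ(x) = ((b - x) f(a)^r + (x - a) f(b)^r) / (b - a)` and define `ψ` likewise from `g` and `s`.
Convexity at the endpoints gives `f ≤ φ^(1/r)` and `g ≤ ψ^(1/s)`. Weighted AM-GM with weights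
`1/r`, `1/s`, applied after normalising `φ` and `ψ` by their means `M` and `N`, gives
`φ^(1/r) ψ^(1/s) ≤ M^(1/r) N^(1/s) (φ/(r M) + ψ/(s N))`. This majorant is affine, and its mean
over `[a, b]` is `M^(1/r) N^(1/s) (1/r + 1/s) = M^(1/r) N^(1/s)`.
-/

open MeasureTheory Set

def IsRConvexOn (r : ℝ) (s : Set ℝ) (f : ℝ → ℝ) : Prop :=
  ∀ x ∈ s, ∀ y ∈ s, ∀ t ∈ Icc (0 : ℝ) 1,
    f (t * x + (1 - t) * y) ≤ (t * f x ^ r + (1 - t) * f y ^ r) ^ (1 / r)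

noncomputable def secant (a b A B x : ℝ) : ℝ := ((b - x) * A + (x - a) * B) / (b - a)

lemma continuous_secant (a b A B : ℝ) : Continuous (secant a b A B) := by
  unfold secant; fun_prop

lemma secant_nonneg {a b A B x : ℝ} (hx : x ∈ Icc a b) (hA : 0 ≤ A) (hB : 0 ≤ B) :
    0 ≤ secant a b A B x := by
  obtain ⟨hax, hxb⟩ := hx
  unfold secant
  apply div_nonneg <;> nlinarith

lemma integral_secant {a b : ℝ} (hab : a ≠ b) (A B : ℝ) :
    ∫ x in a..b, secant a b A B x = (b - a) * ((A + B) / 2) := by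
  have hba : b - a ≠ 0 := sub_ne_zero.mpr hab.symm
  have haffine :
      ∀ x, secant a b A B x = (b * A - a * B) / (b - a) + (B - A) / (b - a) * x := by
    intro x; unfold secant; field_simp; ring
  simp_rw [haffine]
  rw [intervalIntegral.integral_add intervalIntegrable_const
      (intervalIntegral.intervalIntegrable_id.const_mul _),
    intervalIntegral.integral_const, intervalIntegral.integral_const_mul, integral_id, smul_eq_mul]
  field_simp
  ring

lemma IsRConvexOn.le_secant {r a b : ℝ} {f : ℝ → ℝ} (hf : IsRConvexOn r (Icc a b) f)
    (hab : a < b) {x : ℝ} (hx : x ∈ Icc a b) :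
    f x ≤ secant a b (f a ^ r) (f b ^ r) x ^ (1 / r) := by
  have hba : 0 < b - a := sub_pos.mpr hab
  set t := (b - x) / (b - a)
  have ht : t ∈ Icc (0 : ℝ) 1 :=
    ⟨div_nonneg (by linarith [hx.2]) hba.le, (div_le_one hba).mpr (by linarith [hx.1])⟩
  have hcomb : t * a + (1 - t) * b = x := by
    simp only [t]; field_simp; ring
  have hweights : t * f a ^ r + (1 - t) * f b ^ r = secant a b (f a ^ r) (f b ^ r) x := by
    simp only [t, secant]; field_simp; ring
  simpa only [hcomb, hweights] using
    hf a (left_mem_Icc.mpr hab.le) b (right_mem_Icc.mpr hab.le) t ht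

lemma rpow_mul_rpow_le_mul_weighted_add {w₁ w₂ u v M N : ℝ} (hw₁ : 0 ≤ w₁) (hw₂ : 0 ≤ w₂)
    (hw : w₁ + w₂ = 1) (hu : 0 ≤ u) (hv : 0 ≤ v) (hM : 0 < M) (hN : 0 < N) :
    u ^ w₁ * v ^ w₂ ≤ M ^ w₁ * N ^ w₂ * (w₁ * (u / M) + w₂ * (v / N)) := by
  have hscale : u ^ w₁ * v ^ w₂ = M ^ w₁ * N ^ w₂ * ((u / M) ^ w₁ * (v / N) ^ w₂) := by
    rw [Real.div_rpow hu hM.le, Real.div_rpow hv hN.le]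
    have := (Real.rpow_pos_of_pos hM w₁).ne'
    have := (Real.rpow_pos_of_pos hN w₂).ne'
    field_simp
  rw [hscale]
  gcongr
  exact Real.geom_mean_le_arith_mean2_weighted hw₁ hw₂ (div_nonneg hu hM.le)
    (div_nonneg hv hN.le) hw

section YoungMajorant

variable (a b w₁ w₂ A B C D : ℝ)

noncomputable def youngMajorant (x : ℝ) : ℝ :=
  ((A + B) / 2) ^ w₁ * ((C + D) / 2) ^ w₂ *
    (w₁ * (secant a b A B x / ((A + B) / 2)) + w₂ * (secant a b C D x / ((C + D) / 2)))

lemma continuous_youngMajorant : Continuous (youngMajorant a b w₁ w₂ A B C D) := by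
  have := continuous_secant a b A B
  have := continuous_secant a b C D
  unfold youngMajorant; fun_prop

variable {a b w₁ w₂ A B C D}

lemma integral_youngMajorant (hab : a ≠ b) (hw : w₁ + w₂ = 1) (hAB : A + B ≠ 0)
    (hCD : C + D ≠ 0) :
    ∫ x in a..b, youngMajorant a b w₁ w₂ A B C D x =
      (b - a) * (((A + B) / 2) ^ w₁ * ((C + D) / 2) ^ w₂) := by
  have hint : ∀ w E F, IntervalIntegrable (fun x => w * (secant a b E F x / ((E + F) / 2)))
      volume a b := fun _ _ _ =>
    (continuous_const.mul ((continuous_secant _ _ _ _).div_const _)).intervalIntegrable _ _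
  unfold youngMajorant
  rw [intervalIntegral.integral_const_mul, intervalIntegral.integral_add (hint _ _ _) (hint _ _ _),
    intervalIntegral.integral_const_mul, intervalIntegral.integral_const_mul,
    intervalIntegral.integral_div, intervalIntegral.integral_div,
    integral_secant hab, integral_secant hab,
    mul_div_cancel_right₀ _ (div_ne_zero hAB two_ne_zero),
    mul_div_cancel_right₀ _ (div_ne_zero hCD two_ne_zero)]
  linear_combination (b - a) * (((A + B) / 2) ^ w₁ * ((C + D) / 2) ^ w₂) * hw

end YoungMajorant

theorem rconvex_product_holder_hadamard_general
    (a b r s : ℝ) (f g : ℝ → ℝ) (hab : a < b)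
    (hr : 1 < r) (hrs : 1 / r + 1 / s = 1)
    (hfpos : ∀ x ∈ Set.Icc a b, 0 < f x)
    (hgpos : ∀ x ∈ Set.Icc a b, 0 < g x)
    (hfconv : ∀ x ∈ Set.Icc a b, ∀ y ∈ Set.Icc a b, ∀ t ∈ Set.Icc (0:ℝ) 1,
      f (t * x + (1 - t) * y) ≤ (t * f x ^ r + (1 - t) * f y ^ r) ^ (1 / r))
    (hgconv : ∀ x ∈ Set.Icc a b, ∀ y ∈ Set.Icc a b, ∀ t ∈ Set.Icc (0:ℝ) 1,
      g (t * x + (1 - t) * y) ≤ (t * g x ^ s + (1 - t) * g y ^ s) ^ (1 / s))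
    (hintfg : IntervalIntegrable (fun x => f x * g x) volume a b) :
    (1 / (b - a)) * ∫ x in a..b, f x * g x ≤
      ((f a ^ r + f b ^ r) / 2) ^ (1 / r) * ((g a ^ s + g b ^ s) / 2) ^ (1 / s) := by
  have hw₁ : 0 ≤ 1 / r := by positivity
  have hw₂ : 0 ≤ 1 / s := by linarith [(div_lt_one (by linarith : (0 : ℝ) < r)).mpr hr]
  have ha : a ∈ Icc a b := left_mem_Icc.mpr hab.le
  have hb : b ∈ Icc a b := right_mem_Icc.mpr hab.le
  have hA := Real.rpow_pos_of_pos (hfpos a ha) r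
  have hB := Real.rpow_pos_of_pos (hfpos b hb) r
  have hC := Real.rpow_pos_of_pos (hgpos a ha) s
  have hD := Real.rpow_pos_of_pos (hgpos b hb) s
  have hle : ∀ x ∈ Icc a b, f x * g x ≤
      youngMajorant a b (1 / r) (1 / s) (f a ^ r) (f b ^ r) (g a ^ s) (g b ^ s) x :=
    fun x hx =>
      (mul_le_mul (IsRConvexOn.le_secant hfconv hab hx) (IsRConvexOn.le_secant hgconv hab hx)
        (hgpos x hx).le (Real.rpow_nonneg (secant_nonneg hx hA.le hB.le) _)).trans
      (rpow_mul_rpow_le_mul_weighted_add hw₁ hw₂ hrs (secant_nonneg hx hA.le hB.le)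
        (secant_nonneg hx hC.le hD.le) (by positivity) (by positivity))
  calc (1 / (b - a)) * ∫ x in a..b, f x * g x
      ≤ (1 / (b - a)) * ∫ x in a..b,
          youngMajorant a b (1 / r) (1 / s) (f a ^ r) (f b ^ r) (g a ^ s) (g b ^ s) x := by
        gcongr
        exact intervalIntegral.integral_mono_on hab.le hintfg
          ((continuous_youngMajorant ..).intervalIntegrable a b) hle
    _ = _ := by
        rw [integral_youngMajorant hab.ne hrs (by positivity) (by positivity)]
        field_simp [(sub_pos.mpr hab).ne']

theorem rconvex_product_holder_hadamard
    (a b r s : ℝ) (f g : ℝ → ℝ) (hab : a < b)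
    (hr : 1 < r) (hrs : 1 / r + 1 / s = 1)
    (hfpos : ∀ x ∈ Set.Icc a b, 0 < f x)
    (hgpos : ∀ x ∈ Set.Icc a b, 0 < g x)
    (hfconv : ∀ x ∈ Set.Icc a b, ∀ y ∈ Set.Icc a b, ∀ t ∈ Set.Icc (0:ℝ) 1,
      f (t * x + (1 - t) * y) ≤ (t * f x ^ r + (1 - t) * f y ^ r) ^ (1 / r))
    (hgconv : ∀ x ∈ Set.Icc a b, ∀ y ∈ Set.Icc a b, ∀ t ∈ Set.Icc (0:ℝ) 1,
      g (t * x + (1 - t) * y) ≤ (t * g x ^ s + (1 - t) * g y ^ s) ^ (1 / s))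
    (hintf : IntervalIntegrable f volume a b)
    (hintg : IntervalIntegrable g volume a b)
    (hintfg : IntervalIntegrable (fun x => f x * g x) volume a b) :
    (1 / (b - a)) * ∫ x in a..b, f x * g x ≤
      ((f a ^ r + f b ^ r) / 2) ^ (1 / r) * ((g a ^ s + g b ^ s) / 2) ^ (1 / s) :=
  rconvex_product_holder_hadamard_general a b r s f g hab hr hrs hfpos hgpos hfconv hgconv hintfg
end

section
/- Let f, g : Δ = [a,b]×[c,d] → (0,∞) be coordinated 2-convex functions with a < b, c < d. Then (1/((b-a)(d-c))) ∫_a^b ∫_c^d f(x,y) g(x,y) dy dx ≤ (1/(8(b-a))) [∫_a^b f(x,c)² dx + ∫_a^b f(x,d)² dx + ∫_a^b g(x,c)² dx + ∫_a^b g(x,d)² dx] + (1/(8(d-c))) [∫_c^d f(a,y)² dy + ∫_c^d f(b,y)² dy + ∫_c^d g(a,y)² dy + ∫_c^d g(b,y)² dy]. -/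
/-!
Pointwise `f g ≤ (f² + g²) / 2`. For fixed `x` the maps `y ↦ f x y ^ 2`, `y ↦ g x y ^ 2` are
convex, and the right Hermite–Hadamard inequality `∫ y in c..d, h y ≤ (d - c) * (h c + h d) / 2`
(integrate `h y + h (c + d - y) ≤ h c + h d`) bounds the inner integral of `f g` by `(d - c) / 4`
times the four squared boundary values. Integrating in `x` (Fubini) bounds `∫∫ f g` by the
`x`-integrals along `y = c, d`; exchanging the variables bounds it by the `y`-integrals along
`x = a, b`, and the theorem is the average of the two bounds.
-/

open MeasureTheory Set Function

theorem convexOn_of_forall_mul_add_le {s : Set ℝ} {h : ℝ → ℝ} (hs : Convex ℝ s)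
    (hh : ∀ x ∈ s, ∀ y ∈ s, ∀ t ∈ Icc (0:ℝ) 1,
      h (t * x + (1 - t) * y) ≤ t * h x + (1 - t) * h y) :
    ConvexOn ℝ s h := by
  refine ⟨hs, fun x hx y hy p q hp hq hpq => ?_⟩
  obtain rfl : q = 1 - p := by linarith
  exact hh x hx y hy p ⟨hp, by linarith⟩

namespace ConvexOn

variable {f : ℝ → ℝ} {a b : ℝ}

theorem add_apply_add_sub_le (hf : ConvexOn ℝ (Icc a b) f) {x : ℝ} (hx : x ∈ Icc a b) :
    f x + f (a + b - x) ≤ f a + f b := by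
  have hab : a ≤ b := hx.1.trans hx.2
  rw [← segment_eq_Icc hab] at hx
  obtain ⟨p, q, hp, hq, hpq, rfl⟩ := hx
  have ha : a ∈ Icc a b := left_mem_Icc.2 hab
  have hb : b ∈ Icc a b := right_mem_Icc.2 hab
  have hreflect : a + b - (p • a + q • b) = q • a + p • b := by
    simp only [smul_eq_mul]
    linear_combination (-(a + b)) * hpq
  rw [hreflect]
  have h₁ := hf.2 ha hb hp hq hpq
  have h₂ := hf.2 ha hb hq hp (by linarith)
  simp only [smul_eq_mul] at h₁ h₂ ⊢
  linear_combination h₁ + h₂ + (f a + f b) * hpq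

theorem two_mul_apply_midpoint_sub_max_le (hf : ConvexOn ℝ (Icc a b) f) {x : ℝ}
    (hx : x ∈ Icc a b) : 2 * f ((a + b) / 2) - max (f a) (f b) ≤ f x := by
  have hab : a ≤ b := hx.1.trans hx.2
  have hx' : a + b - x ∈ Icc a b := ⟨by linarith [hx.2], by linarith [hx.1]⟩
  have hmid : f ((a + b) / 2) ≤ (1 / 2 : ℝ) • f x + (1 / 2 : ℝ) • f (a + b - x) := by
    have hmid_eq : (a + b) / 2 = (1 / 2 : ℝ) • x + (1 / 2 : ℝ) • (a + b - x) := by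
      simp only [smul_eq_mul]
      ring
    rw [hmid_eq]
    exact hf.2 hx hx' (by norm_num) (by norm_num) (by norm_num)
  simp only [smul_eq_mul] at hmid
  linarith [hf.le_max_of_mem_Icc (left_mem_Icc.2 hab) (right_mem_Icc.2 hab) hx']

theorem integrableOn_Icc (hf : ConvexOn ℝ (Icc a b) f) : IntegrableOn f (Icc a b) := by
  have hmeas : AEStronglyMeasurable f (volume.restrict (Icc a b)) := by
    rw [← Measure.restrict_congr_set Ioo_ae_eq_Icc]
    have hcont := hf.continuousOn_interior
    rw [interior_Icc] at hcont
    exact hcont.aestronglyMeasurable measurableSet_Ioo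
  have hbound : ∀ x ∈ Icc a b,
      ‖f x‖ ≤ |max (f a) (f b)| + |2 * f ((a + b) / 2) - max (f a) (f b)| := by
    intro x hx
    have hab : a ≤ b := hx.1.trans hx.2
    have hupper := hf.le_max_of_mem_Icc (left_mem_Icc.2 hab) (right_mem_Icc.2 hab) hx
    have hlower := hf.two_mul_apply_midpoint_sub_max_le hx
    rw [Real.norm_eq_abs, abs_le]
    constructor <;> linarith [le_abs_self (max (f a) (f b)), neg_abs_le (max (f a) (f b)),
      le_abs_self (2 * f ((a + b) / 2) - max (f a) (f b)),
      neg_abs_le (2 * f ((a + b) / 2) - max (f a) (f b))]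
  exact (integrableOn_const measure_Icc_lt_top.ne).mono' hmeas
    (ae_restrict_of_forall_mem measurableSet_Icc hbound)

theorem intervalIntegrable (hf : ConvexOn ℝ (Icc a b) f) (hab : a ≤ b) :
    IntervalIntegrable f volume a b :=
  (intervalIntegrable_iff_integrableOn_Icc_of_le hab).2 hf.integrableOn_Icc

theorem intervalIntegral_le_mul_add_div_two (hf : ConvexOn ℝ (Icc a b) f) (hab : a ≤ b) :
    ∫ x in a..b, f x ≤ (b - a) * ((f a + f b) / 2) := by
  have hi := hf.intervalIntegrable hab
  have hi' : IntervalIntegrable (fun x => f (a + b - x)) volume a b := by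
    simpa using (hi.comp_sub_left (a + b)).symm
  have hreflect : ∫ x in a..b, f (a + b - x) = ∫ x in a..b, f x := by
    simp [intervalIntegral.integral_comp_sub_left]
  have hsum : ∫ x in a..b, (f x + f (a + b - x)) ≤ ∫ _ in a..b, (f a + f b) :=
    intervalIntegral.integral_mono_on hab (hi.add hi') intervalIntegrable_const
      fun x hx => hf.add_apply_add_sub_le hx
  rw [intervalIntegral.integral_add hi hi', hreflect, intervalIntegral.integral_const,
    smul_eq_mul] at hsum
  linarith

end ConvexOn

theorem intervalIntegral_mul_le_of_convexOn_sq {u v : ℝ → ℝ} {c d : ℝ} (hcd : c ≤ d)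
    (huv : IntervalIntegrable (fun y => u y * v y) volume c d)
    (hu : ConvexOn ℝ (Icc c d) fun y => u y ^ 2) (hv : ConvexOn ℝ (Icc c d) fun y => v y ^ 2) :
    ∫ y in c..d, u y * v y ≤ (d - c) / 4 * (u c ^ 2 + u d ^ 2 + v c ^ 2 + v d ^ 2) := by
  have hu' := hu.intervalIntegrable hcd
  have hv' := hv.intervalIntegrable hcd
  calc ∫ y in c..d, u y * v y ≤ ∫ y in c..d, (u y ^ 2 + v y ^ 2) / 2 :=
        intervalIntegral.integral_mono_on hcd huv ((hu'.add hv').div_const 2) fun y _ => by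
          linarith [two_mul_le_add_sq (u y) (v y)]
    _ = ((∫ y in c..d, u y ^ 2) + ∫ y in c..d, v y ^ 2) / 2 := by
        rw [intervalIntegral.integral_div, intervalIntegral.integral_add hu' hv']
    _ ≤ ((d - c) * ((u c ^ 2 + u d ^ 2) / 2) + (d - c) * ((v c ^ 2 + v d ^ 2) / 2)) / 2 := by
        gcongr
        exacts [hu.intervalIntegral_le_mul_add_div_two hcd,
          hv.intervalIntegral_le_mul_add_div_two hcd]
    _ = (d - c) / 4 * (u c ^ 2 + u d ^ 2 + v c ^ 2 + v d ^ 2) := by ring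

theorem intervalIntegral_intervalIntegral_le {k : ℝ → ℝ → ℝ} {φ : ℝ → ℝ} {a b c d : ℝ}
    (hab : a ≤ b) (hcd : c ≤ d) (hk : IntegrableOn (uncurry k) (Icc a b ×ˢ Icc c d))
    (hφ : IntervalIntegrable φ volume a b)
    (hle : ∀ x ∈ Icc a b, IntervalIntegrable (k x) volume c d → ∫ y in c..d, k x y ≤ φ x) :
    ∫ x in a..b, ∫ y in c..d, k x y ≤ ∫ x in a..b, φ x := by
  rw [IntegrableOn, Measure.volume_eq_prod, ← Measure.prod_restrict] at hk
  have hslice : ∀ x, (∫ y in c..d, k x y) = ∫ y in Icc c d, k x y := fun x => by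
    rw [intervalIntegral.integral_of_le hcd, integral_Icc_eq_integral_Ioc]
  refine intervalIntegral.integral_mono_ae_restrict hab ?_ hφ ?_
  · rw [intervalIntegrable_iff_integrableOn_Icc_of_le hab]
    simp only [hslice]
    exact hk.integral_prod_left
  · filter_upwards [hk.prod_right_ae, ae_restrict_mem measurableSet_Icc] with x hx hxab
    exact hle x hxab ((intervalIntegrable_iff_integrableOn_Icc_of_le hcd).2 hx)

theorem intervalIntegral_intervalIntegral_mul_le_of_convexOn_sq {f g : ℝ → ℝ → ℝ} {a b c d : ℝ}
    (hab : a ≤ b) (hcd : c ≤ d)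
    (hfg : IntegrableOn (uncurry fun x y => f x y * g x y) (Icc a b ×ˢ Icc c d))
    (hf : ∀ x ∈ Icc a b, ConvexOn ℝ (Icc c d) fun y => f x y ^ 2)
    (hg : ∀ x ∈ Icc a b, ConvexOn ℝ (Icc c d) fun y => g x y ^ 2)
    (hfc : IntervalIntegrable (fun x => f x c ^ 2) volume a b)
    (hfd : IntervalIntegrable (fun x => f x d ^ 2) volume a b)
    (hgc : IntervalIntegrable (fun x => g x c ^ 2) volume a b)
    (hgd : IntervalIntegrable (fun x => g x d ^ 2) volume a b) :
    ∫ x in a..b, ∫ y in c..d, f x y * g x y ≤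
      (d - c) / 4 * ((∫ x in a..b, f x c ^ 2) + (∫ x in a..b, f x d ^ 2) +
        (∫ x in a..b, g x c ^ 2) + ∫ x in a..b, g x d ^ 2) := by
  calc ∫ x in a..b, ∫ y in c..d, f x y * g x y
      ≤ ∫ x in a..b, (d - c) / 4 * (f x c ^ 2 + f x d ^ 2 + g x c ^ 2 + g x d ^ 2) :=
        intervalIntegral_intervalIntegral_le hab hcd hfg
          ((((hfc.add hfd).add hgc).add hgd).const_mul _)
          fun x hx hslice => intervalIntegral_mul_le_of_convexOn_sq hcd hslice (hf x hx) (hg x hx)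
    _ = _ := by
        rw [intervalIntegral.integral_const_mul, intervalIntegral.integral_add
          ((hfc.add hfd).add hgc) hgd, intervalIntegral.integral_add (hfc.add hfd) hgc,
          intervalIntegral.integral_add hfc hfd]

theorem coordinated_two_convex_product_hadamard_general
    (a b c d : ℝ) (f g : ℝ → ℝ → ℝ) (hab : a < b) (hcd : c < d)
    (hfconv₁ : ∀ y ∈ Set.Icc c d, ∀ u₁ ∈ Set.Icc a b, ∀ u₂ ∈ Set.Icc a b, ∀ t ∈ Set.Icc (0:ℝ) 1,
      f (t * u₁ + (1 - t) * u₂) y ^ 2 ≤ t * f u₁ y ^ 2 + (1 - t) * f u₂ y ^ 2)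
    (hfconv₂ : ∀ x ∈ Set.Icc a b, ∀ v₁ ∈ Set.Icc c d, ∀ v₂ ∈ Set.Icc c d, ∀ t ∈ Set.Icc (0:ℝ) 1,
      f x (t * v₁ + (1 - t) * v₂) ^ 2 ≤ t * f x v₁ ^ 2 + (1 - t) * f x v₂ ^ 2)
    (hgconv₁ : ∀ y ∈ Set.Icc c d, ∀ u₁ ∈ Set.Icc a b, ∀ u₂ ∈ Set.Icc a b, ∀ t ∈ Set.Icc (0:ℝ) 1,
      g (t * u₁ + (1 - t) * u₂) y ^ 2 ≤ t * g u₁ y ^ 2 + (1 - t) * g u₂ y ^ 2)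
    (hgconv₂ : ∀ x ∈ Set.Icc a b, ∀ v₁ ∈ Set.Icc c d, ∀ v₂ ∈ Set.Icc c d, ∀ t ∈ Set.Icc (0:ℝ) 1,
      g x (t * v₁ + (1 - t) * v₂) ^ 2 ≤ t * g x v₁ ^ 2 + (1 - t) * g x v₂ ^ 2)
    (hintfg : IntegrableOn (fun p : ℝ × ℝ => f p.1 p.2 * g p.1 p.2)
      (Set.Icc a b ×ˢ Set.Icc c d) volume) :
    (1 / ((b - a) * (d - c))) * ∫ x in a..b, ∫ y in c..d, f x y * g x y ≤
      (1 / (8 * (b - a))) *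
        ((∫ x in a..b, f x c ^ 2) + (∫ x in a..b, f x d ^ 2) +
          (∫ x in a..b, g x c ^ 2) + (∫ x in a..b, g x d ^ 2)) +
      (1 / (8 * (d - c))) *
        ((∫ y in c..d, f a y ^ 2) + (∫ y in c..d, f b y ^ 2) +
          (∫ y in c..d, g a y ^ 2) + (∫ y in c..d, g b y ^ 2)) := by
  have hf₁ : ∀ y ∈ Icc c d, ConvexOn ℝ (Icc a b) fun x => f x y ^ 2 :=
    fun y hy => convexOn_of_forall_mul_add_le (convex_Icc a b) (hfconv₁ y hy)
  have hf₂ : ∀ x ∈ Icc a b, ConvexOn ℝ (Icc c d) fun y => f x y ^ 2 :=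
    fun x hx => convexOn_of_forall_mul_add_le (convex_Icc c d) (hfconv₂ x hx)
  have hg₁ : ∀ y ∈ Icc c d, ConvexOn ℝ (Icc a b) fun x => g x y ^ 2 :=
    fun y hy => convexOn_of_forall_mul_add_le (convex_Icc a b) (hgconv₁ y hy)
  have hg₂ : ∀ x ∈ Icc a b, ConvexOn ℝ (Icc c d) fun y => g x y ^ 2 :=
    fun x hx => convexOn_of_forall_mul_add_le (convex_Icc c d) (hgconv₂ x hx)
  have ha := left_mem_Icc.2 hab.le
  have hb := right_mem_Icc.2 hab.le
  have hc := left_mem_Icc.2 hcd.le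
  have hd := right_mem_Icc.2 hcd.le
  have hbound_x := intervalIntegral_intervalIntegral_mul_le_of_convexOn_sq hab.le hcd.le hintfg
    hf₂ hg₂ ((hf₁ c hc).intervalIntegrable hab.le) ((hf₁ d hd).intervalIntegrable hab.le)
    ((hg₁ c hc).intervalIntegrable hab.le) ((hg₁ d hd).intervalIntegrable hab.le)
  have hbound_y := intervalIntegral_intervalIntegral_mul_le_of_convexOn_sq
    (f := fun y x => f x y) (g := fun y x => g x y) hcd.le hab.le hintfg.swap hf₁ hg₁
    ((hf₂ a ha).intervalIntegrable hcd.le) ((hf₂ b hb).intervalIntegrable hcd.le)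
    ((hg₂ a ha).intervalIntegrable hcd.le) ((hg₂ b hb).intervalIntegrable hcd.le)
  rw [← intervalIntegral_intervalIntegral_swap] at hbound_y
  · have hba : 0 < b - a := sub_pos.2 hab
    have hdc : 0 < d - c := sub_pos.2 hcd
    rw [div_mul_eq_mul_div, one_mul, div_le_iff₀ (by positivity)]
    field_simp
    linear_combination 4 * hbound_x + 4 * hbound_y
  · rw [uIoc_of_le hab.le, uIoc_of_le hcd.le]
    exact hintfg.mono_set (prod_mono Ioc_subset_Icc_self Ioc_subset_Icc_self)

theorem coordinated_two_convex_product_hadamard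
    (a b c d : ℝ) (f g : ℝ → ℝ → ℝ) (hab : a < b) (hcd : c < d)
    (hfpos : ∀ x ∈ Set.Icc a b, ∀ y ∈ Set.Icc c d, 0 < f x y)
    (hgpos : ∀ x ∈ Set.Icc a b, ∀ y ∈ Set.Icc c d, 0 < g x y)
    (hfconv₁ : ∀ y ∈ Set.Icc c d, ∀ u₁ ∈ Set.Icc a b, ∀ u₂ ∈ Set.Icc a b, ∀ t ∈ Set.Icc (0:ℝ) 1,
      f (t * u₁ + (1 - t) * u₂) y ^ 2 ≤ t * f u₁ y ^ 2 + (1 - t) * f u₂ y ^ 2)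
    (hfconv₂ : ∀ x ∈ Set.Icc a b, ∀ v₁ ∈ Set.Icc c d, ∀ v₂ ∈ Set.Icc c d, ∀ t ∈ Set.Icc (0:ℝ) 1,
      f x (t * v₁ + (1 - t) * v₂) ^ 2 ≤ t * f x v₁ ^ 2 + (1 - t) * f x v₂ ^ 2)
    (hgconv₁ : ∀ y ∈ Set.Icc c d, ∀ u₁ ∈ Set.Icc a b, ∀ u₂ ∈ Set.Icc a b, ∀ t ∈ Set.Icc (0:ℝ) 1,
      g (t * u₁ + (1 - t) * u₂) y ^ 2 ≤ t * g u₁ y ^ 2 + (1 - t) * g u₂ y ^ 2)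
    (hgconv₂ : ∀ x ∈ Set.Icc a b, ∀ v₁ ∈ Set.Icc c d, ∀ v₂ ∈ Set.Icc c d, ∀ t ∈ Set.Icc (0:ℝ) 1,
      g x (t * v₁ + (1 - t) * v₂) ^ 2 ≤ t * g x v₁ ^ 2 + (1 - t) * g x v₂ ^ 2)
    (hintf : IntegrableOn (fun p : ℝ × ℝ => f p.1 p.2) (Set.Icc a b ×ˢ Set.Icc c d) volume)
    (hintg : IntegrableOn (fun p : ℝ × ℝ => g p.1 p.2) (Set.Icc a b ×ˢ Set.Icc c d) volume)
    (hintfg : IntegrableOn (fun p : ℝ × ℝ => f p.1 p.2 * g p.1 p.2)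
      (Set.Icc a b ×ˢ Set.Icc c d) volume) :
    (1 / ((b - a) * (d - c))) * ∫ x in a..b, ∫ y in c..d, f x y * g x y ≤
      (1 / (8 * (b - a))) *
        ((∫ x in a..b, f x c ^ 2) + (∫ x in a..b, f x d ^ 2) +
          (∫ x in a..b, g x c ^ 2) + (∫ x in a..b, g x d ^ 2)) +
      (1 / (8 * (d - c))) *
        ((∫ y in c..d, f a y ^ 2) + (∫ y in c..d, f b y ^ 2) +
          (∫ y in c..d, g a y ^ 2) + (∫ y in c..d, g b y ^ 2)) :=
  coordinated_two_convex_product_hadamard_general a b c d f g hab hcd hfconv₁ hfconv₂ hgconv₁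
    hgconv₂ hintfg
end

section
/- Suppose f : Δ = [a,b]×[c,d] → (0,∞) is coordinated convex (convex in each variable separately) and integrable on Δ with a < b, c < d. Then (1/2)[(1/(b-a)) ∫_a^b f(x,(c+d)/2) dx + (1/(d-c)) ∫_c^d f((a+b)/2, y) dy] ≤ (1/((b-a)(d-c))) ∫_a^b ∫_c^d f(x,y) dy dx. -/
/-! Hermite–Hadamard on each slice: for `g` convex on `[c, d]`, pairing `y` with its reflection
`c + d - y` gives `2 g((c + d)/2) ≤ g y + g (c + d - y)`, and integrating yields
`(d - c) g((c + d)/2) ≤ ∫_c^d g`. Applied to the slices `f x ·`, integrated over `x`, this bounds the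
first term; applied to the slices `f · y`, together with Fubini, it bounds the second. -/

open MeasureTheory Set Function

theorem convexOn_of_forall_mul_add_one_sub_mul_le {s : Set ℝ} {g : ℝ → ℝ} (hs : Convex ℝ s)
    (h : ∀ u ∈ s, ∀ v ∈ s, ∀ t ∈ Icc (0 : ℝ) 1, g (t * u + (1 - t) * v) ≤ t * g u + (1 - t) * g v) :
    ConvexOn ℝ s g := by
  refine ⟨hs, fun u hu v hv t r ht _ htr => ?_⟩
  obtain rfl : r = 1 - t := by linarith
  exact h u hu v hv t ⟨ht, by linarith⟩

theorem ConvexOn.mul_map_midpoint_le_intervalIntegral {g : ℝ → ℝ} {c d : ℝ} (hcd : c ≤ d)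
    (hg : ConvexOn ℝ (Icc c d) g) (hint : IntervalIntegrable g volume c d) :
    (d - c) * g ((c + d) / 2) ≤ ∫ y in c..d, g y := by
  have hreflect_int : IntervalIntegrable (fun y => g (c + d - y)) volume c d := by
    simpa using (hint.comp_sub_left (c + d)).symm
  have hreflect : ∫ y in c..d, g (c + d - y) = ∫ y in c..d, g y := by
    simp [intervalIntegral.integral_comp_sub_left]
  have hpair : ∀ y ∈ Icc c d, 2 * g ((c + d) / 2) ≤ g y + g (c + d - y) := by
    intro y hy
    have hy' : c + d - y ∈ Icc c d := ⟨by linarith [hy.2], by linarith [hy.1]⟩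
    have h := hg.2 hy hy' (by norm_num : (0 : ℝ) ≤ 1 / 2) (by norm_num : (0 : ℝ) ≤ 1 / 2)
      (by norm_num)
    have hmid : (1 / 2 : ℝ) • y + (1 / 2 : ℝ) • (c + d - y) = (c + d) / 2 := by
      simp only [smul_eq_mul]; ring
    rw [hmid, smul_eq_mul, smul_eq_mul] at h
    linarith
  have h2 : 2 * ((d - c) * g ((c + d) / 2)) ≤ 2 * ∫ y in c..d, g y :=
    calc 2 * ((d - c) * g ((c + d) / 2)) = ∫ _ in c..d, 2 * g ((c + d) / 2) := by
          rw [intervalIntegral.integral_const, smul_eq_mul]; ring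
      _ ≤ ∫ y in c..d, (g y + g (c + d - y)) :=
          intervalIntegral.integral_mono_on hcd intervalIntegrable_const
            (hint.add hreflect_int) hpair
      _ = 2 * ∫ y in c..d, g y := by
          rw [intervalIntegral.integral_add hint hreflect_int, hreflect]; ring
  linarith

theorem intervalIntegral_eq_integral_Icc {g : ℝ → ℝ} {a b : ℝ} (hab : a ≤ b) :
    ∫ x in a..b, g x = ∫ x in Icc a b, g x := by
  rw [intervalIntegral.integral_of_le hab, integral_Icc_eq_integral_Ioc]

section Rectangle

variable {a b c d : ℝ} {f : ℝ → ℝ → ℝ}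

theorem integrable_prod_restrict_Icc (hf : IntegrableOn (uncurry f) (Icc a b ×ˢ Icc c d)) :
    Integrable (uncurry f) ((volume.restrict (Icc a b)).prod (volume.restrict (Icc c d))) := by
  rwa [Measure.prod_restrict]

theorem intervalIntegral_integral_swap (hab : a ≤ b) (hcd : c ≤ d)
    (hf : IntegrableOn (uncurry f) (Icc a b ×ˢ Icc c d)) :
    ∫ x in a..b, ∫ y in c..d, f x y = ∫ y in c..d, ∫ x in a..b, f x y := by
  simp only [intervalIntegral_eq_integral_Icc hab, intervalIntegral_eq_integral_Icc hcd]
  exact integral_integral_swap (integrable_prod_restrict_Icc hf)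

theorem mul_integral_midpoint_le_integral_integral (hab : a ≤ b) (hcd : c ≤ d)
    (hconv : ∀ x ∈ Icc a b, ConvexOn ℝ (Icc c d) (f x))
    (hf : IntegrableOn (uncurry f) (Icc a b ×ˢ Icc c d))
    (hmid : IntervalIntegrable (fun x => f x ((c + d) / 2)) volume a b) :
    (d - c) * ∫ x in a..b, f x ((c + d) / 2) ≤ ∫ x in a..b, ∫ y in c..d, f x y := by
  have hprod := integrable_prod_restrict_Icc hf
  have hslices : IntervalIntegrable (fun x => ∫ y in c..d, f x y) volume a b := by
    rw [intervalIntegrable_iff_integrableOn_Icc_of_le hab, IntegrableOn]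
    simpa only [intervalIntegral_eq_integral_Icc hcd, uncurry_apply_pair] using hprod.integral_prod_left
  rw [← intervalIntegral.integral_const_mul]
  refine intervalIntegral.integral_mono_ae_restrict hab (hmid.const_mul _) hslices ?_
  filter_upwards [hprod.prod_right_ae, ae_restrict_mem measurableSet_Icc] with x hx hxab
  have hslice : IntervalIntegrable (f x) volume c d :=
    (intervalIntegrable_iff_integrableOn_Icc_of_le hcd).mpr hx
  exact (hconv x hxab).mul_map_midpoint_le_intervalIntegral hcd hslice

end Rectangle

theorem coordinated_convex_hadamard_left_general
    (a b c d : ℝ) (f : ℝ → ℝ → ℝ) (hab : a < b) (hcd : c < d)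
    (hconv₁ : ∀ y ∈ Set.Icc c d, ∀ u₁ ∈ Set.Icc a b, ∀ u₂ ∈ Set.Icc a b, ∀ t ∈ Set.Icc (0:ℝ) 1,
      f (t * u₁ + (1 - t) * u₂) y ≤ t * f u₁ y + (1 - t) * f u₂ y)
    (hconv₂ : ∀ x ∈ Set.Icc a b, ∀ v₁ ∈ Set.Icc c d, ∀ v₂ ∈ Set.Icc c d, ∀ t ∈ Set.Icc (0:ℝ) 1,
      f x (t * v₁ + (1 - t) * v₂) ≤ t * f x v₁ + (1 - t) * f x v₂)
    (hint : IntegrableOn (fun p : ℝ × ℝ => f p.1 p.2) (Set.Icc a b ×ˢ Set.Icc c d) volume)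
    (hint₁ : IntervalIntegrable (fun x => f x ((c + d) / 2)) volume a b)
    (hint₂ : IntervalIntegrable (fun y => f ((a + b) / 2) y) volume c d) :
    (1 / 2) * ((1 / (b - a)) * ∫ x in a..b, f x ((c + d) / 2) +
        (1 / (d - c)) * ∫ y in c..d, f ((a + b) / 2) y) ≤
      (1 / ((b - a) * (d - c))) * ∫ x in a..b, ∫ y in c..d, f x y := by
  have hslice₁ := mul_integral_midpoint_le_integral_integral hab.le hcd.le
    (fun x hx => convexOn_of_forall_mul_add_one_sub_mul_le (convex_Icc c d) (hconv₂ x hx))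
    hint hint₁
  have hslice₂ := mul_integral_midpoint_le_integral_integral (f := fun y x => f x y) hcd.le hab.le
    (fun y hy => convexOn_of_forall_mul_add_one_sub_mul_le (convex_Icc a b) (hconv₁ y hy))
    hint.swap hint₂
  rw [← intervalIntegral_integral_swap hab.le hcd.le hint] at hslice₂
  have hba : 0 < b - a := sub_pos.mpr hab
  have hdc : 0 < d - c := sub_pos.mpr hcd
  -- the first `∫ x in a..b` of the statement scopes over the whole sum after it
  rw [intervalIntegral.integral_add hint₁ intervalIntegrable_const, intervalIntegral.integral_const,
    smul_eq_mul]
  field_simp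
  linarith

theorem coordinated_convex_hadamard_left
    (a b c d : ℝ) (f : ℝ → ℝ → ℝ) (hab : a < b) (hcd : c < d)
    (hpos : ∀ x ∈ Set.Icc a b, ∀ y ∈ Set.Icc c d, 0 < f x y)
    (hconv₁ : ∀ y ∈ Set.Icc c d, ∀ u₁ ∈ Set.Icc a b, ∀ u₂ ∈ Set.Icc a b, ∀ t ∈ Set.Icc (0:ℝ) 1,
      f (t * u₁ + (1 - t) * u₂) y ≤ t * f u₁ y + (1 - t) * f u₂ y)
    (hconv₂ : ∀ x ∈ Set.Icc a b, ∀ v₁ ∈ Set.Icc c d, ∀ v₂ ∈ Set.Icc c d, ∀ t ∈ Set.Icc (0:ℝ) 1,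
      f x (t * v₁ + (1 - t) * v₂) ≤ t * f x v₁ + (1 - t) * f x v₂)
    (hint : IntegrableOn (fun p : ℝ × ℝ => f p.1 p.2) (Set.Icc a b ×ˢ Set.Icc c d) volume)
    (hint₁ : IntervalIntegrable (fun x => f x ((c + d) / 2)) volume a b)
    (hint₂ : IntervalIntegrable (fun y => f ((a + b) / 2) y) volume c d) :
    (1 / 2) * ((1 / (b - a)) * ∫ x in a..b, f x ((c + d) / 2) +
        (1 / (d - c)) * ∫ y in c..d, f ((a + b) / 2) y) ≤
      (1 / ((b - a) * (d - c))) * ∫ x in a..b, ∫ y in c..d, f x y :=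
  coordinated_convex_hadamard_left_general a b c d f hab hcd hconv₁ hconv₂ hint hint₁ hint₂
end
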